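/- arXiv:2602.19846 — 2 statements merged into one kernel-verified Lean document; each statement's English description precedes it below -/
import Mathlib

section
/- Let n ≥ 2. There exist a constant r₀ > 0, real numbers 0 < γ₋ ≤ γ₊ < ∞, a finite set 𝒦 ⊂ ℤ^n \ {0}, and functions Γ_k (k ∈ 𝒦) that are C^∞ on an open neighborhood of the closed ball B := {M ∈ 𝒮_n : ‖M − Id‖ ≤ r₀}, such that for every M ∈ B: (i) Γ_k(M) ∈ [γ₋, γ₊] for every k ∈ 𝒦, and (ii) M = Σ_{k∈𝒦} Γ_k(M)² (k ⊗ k), where k ⊗ k denotes the rank-one matrix with entries k_i k_j. -/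
/-!
Statement 7: the Nash geometric lemma (Lemma 4.2 of the paper).  Matrices are
represented as elements of `Fin n → Fin n → ℝ`; `𝒮_n` is the set of symmetric
ones, and we use the Frobenius norm `‖M‖_F = √(∑_{i,j} M_{ij}²)`.
-/

noncomputable section

/-- The Frobenius distance of a square matrix (given as `Fin n → Fin n → ℝ`)
to the identity matrix. -/
def frobDistId (n : ℕ) (M : Fin n → Fin n → ℝ) : ℝ :=
  Real.sqrt (∑ i, ∑ j, (M i j - if i = j then 1 else 0) ^ 2)

/-- The closed ball of radius `r₀` around the identity in the space of
symmetric `n × n` matrices. -/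
def symBall (n : ℕ) (r₀ : ℝ) : Set (Fin n → Fin n → ℝ) :=
  {M | (∀ i j, M i j = M j i) ∧ frobDistId n M ≤ r₀}

abbrev NashIdx (n : ℕ) := (Fin n) ⊕ (Bool × {p : Fin n × Fin n // p.1 < p.2})

def sgn (s : Bool) : ℤ := if s then 1 else -1

def nashVec (n : ℕ) : NashIdx n → (Fin n → ℤ)
  | .inl l => Pi.single l 1
  | .inr x => Pi.single x.2.1.1 1 + sgn x.1 • Pi.single x.2.1.2 1

def nashT (n : ℕ) : ℝ := 1 / (2 * ((n : ℝ) - 1))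

def nashCoef (n : ℕ) : NashIdx n → (Fin n → Fin n → ℝ) → ℝ
  | .inl l, M => M l l - 1 / 2
  | .inr x, M => (nashT n + (sgn x.1 : ℝ) * M x.2.1.1 x.2.1.2) / 2

lemma sgn_ne_zero (s : Bool) : sgn s ≠ 0 := by cases s <;> simp [sgn]

lemma sgn_inj : Function.Injective sgn := by
  intro s s' h; cases s <;> cases s' <;> simp_all [sgn]

lemma nashVec_inl_apply (n : ℕ) (l x : Fin n) :
    nashVec n (.inl l) x = if x = l then 1 else 0 := by
  simp [nashVec, Pi.single_apply]

lemma nashVec_inr_apply (n : ℕ) (s : Bool) (a b : Fin n) (hab : a < b) (x : Fin n) :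
    nashVec n (.inr (s, ⟨(a, b), hab⟩)) x
      = (if x = a then 1 else 0) + sgn s * (if x = b then 1 else 0) := by
  simp [nashVec, Pi.single_apply]

lemma nashVec_inj (n : ℕ) : Function.Injective (nashVec n) := by
  intro u w h
  match u, w with
  | .inl l, .inl l' =>
      have h1 := congr_fun h l
      rw [nashVec_inl_apply, nashVec_inl_apply, if_pos rfl] at h1
      by_cases hll : l = l'
      · simp [hll]
      · rw [if_neg hll] at h1; norm_num at h1
  | .inl l, .inr (s, ⟨(a, b), hab⟩) =>
      exfalso
      have h1 := congr_fun h a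
      have h2 := congr_fun h b
      rw [nashVec_inl_apply, nashVec_inr_apply] at h1 h2
      rw [if_pos rfl, if_neg hab.ne] at h1
      rw [if_pos rfl, if_neg hab.ne'] at h2
      have hal : a = l := by
        by_contra hx; rw [if_neg hx] at h1; norm_num at h1
      rw [if_neg (by rw [← hal]; exact hab.ne')] at h2
      norm_num at h2
      exact sgn_ne_zero s h2.symm
  | .inr (s, ⟨(a, b), hab⟩), .inl l =>
      exfalso
      have h1 := congr_fun h a
      have h2 := congr_fun h b
      rw [nashVec_inl_apply, nashVec_inr_apply] at h1 h2
      rw [if_pos rfl, if_neg hab.ne] at h1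
      rw [if_pos rfl, if_neg hab.ne'] at h2
      have hal : a = l := by
        by_contra hx; rw [if_neg hx] at h1; norm_num at h1
      rw [if_neg (by rw [← hal]; exact hab.ne')] at h2
      norm_num at h2
      exact sgn_ne_zero s h2
  | .inr (s, ⟨(a, b), hab⟩), .inr (s', ⟨(a', b'), hab'⟩) =>
      have haa : a = a' := by
        by_contra hx
        have h1 := congr_fun h a
        rw [nashVec_inr_apply, nashVec_inr_apply, if_pos rfl, if_neg hab.ne,
          if_neg hx] at h1
        norm_num at h1
        have hab'2 : a = b' := by
          by_contra hy; rw [if_neg hy] at h1; norm_num at h1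
        rw [if_pos hab'2] at h1; norm_num at h1
        have h2 := congr_fun h a'
        rw [nashVec_inr_apply, nashVec_inr_apply, if_pos rfl, if_neg hab'.ne,
          if_neg (Ne.symm hx)] at h2
        norm_num at h2
        have hba : a' = b := by
          by_contra hy; rw [if_neg hy] at h2; norm_num at h2
        -- a < b = a' < b' = a : contradiction
        exact absurd (hab.trans_eq (hba.symm) |>.trans (hab'.trans_eq hab'2.symm)) (lt_irrefl a)
      subst haa
      have h2 := congr_fun h b
      rw [nashVec_inr_apply, nashVec_inr_apply, if_pos rfl, if_neg hab.ne'] at h2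
      norm_num at h2
      have hbb : b = b' := by
        by_contra hy; rw [if_neg hy] at h2; norm_num at h2
        exact sgn_ne_zero s h2
      rw [if_pos hbb] at h2; norm_num at h2
      have hs : s = s' := sgn_inj h2
      subst hs; subst hbb; rfl

lemma nashVec_inl_real (n : ℕ) (l x : Fin n) :
    ((nashVec n (.inl l) x : ℤ) : ℝ) = if x = l then 1 else 0 := by
  simp [nashVec, Pi.single_apply]

lemma nashVec_inr_real (n : ℕ) (s : Bool) (p : {p : Fin n × Fin n // p.1 < p.2}) (x : Fin n) :
    ((nashVec n (.inr (s, p)) x : ℤ) : ℝ)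
      = (if x = p.1.1 then 1 else 0) + (sgn s : ℝ) * (if x = p.1.2 then 1 else 0) := by
  simp [nashVec, Pi.single_apply]

lemma pair_bracket (t x : ℝ) {n : ℕ} (i j a b : Fin n) :
    (t + x) / 2 * (((if i = a then (1:ℝ) else 0) + (if i = b then 1 else 0))
        * ((if j = a then (1:ℝ) else 0) + (if j = b then 1 else 0)))
      + (t - x) / 2 * (((if i = a then (1:ℝ) else 0) - (if i = b then 1 else 0))
        * ((if j = a then (1:ℝ) else 0) - (if j = b then 1 else 0)))
    = t * ((if i = a then (1:ℝ) else 0) * (if j = a then 1 else 0)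
          + (if i = b then (1:ℝ) else 0) * (if j = b then 1 else 0))
      + x * ((if i = a then (1:ℝ) else 0) * (if j = b then 1 else 0)
          + (if i = b then (1:ℝ) else 0) * (if j = a then 1 else 0)) := by
  split_ifs <;> ring

lemma sum_subtype_lt {β : Type*} [AddCommMonoid β] (n : ℕ) (f : Fin n × Fin n → β) :
    ∑ p : {p : Fin n × Fin n // p.1 < p.2}, f p.1
      = ∑ a : Fin n, ∑ b : Fin n, if a < b then f (a, b) else 0 := by
  rw [← Finset.sum_subtype (Finset.univ.filter (fun p : Fin n × Fin n => p.1 < p.2))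
      (by simp) f]
  rw [Finset.sum_filter, Fintype.sum_prod_type]

lemma sum_pick {n : ℕ} (i j : Fin n) (g : Fin n → Fin n → ℝ) :
    ∑ a : Fin n, ∑ b : Fin n, (if i = a then if j = b then g a b else 0 else 0) = g i j := by
  simp [Finset.sum_ite_eq]

lemma sum_pick1 {n : ℕ} (i : Fin n) (g : Fin n → ℝ) :
    ∑ a : Fin n, (if i = a then g a else 0) = g i := by
  simp [Finset.sum_ite_eq]

lemma count_lt {n : ℕ} (i : Fin n) :
    ∑ b : Fin n, ((if i < b then (1:ℝ) else 0) + (if b < i then 1 else 0)) = (n : ℝ) - 1 := by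
  have h : ∀ b : Fin n, ((if i < b then (1:ℝ) else 0) + (if b < i then 1 else 0))
      = 1 - (if i = b then 1 else 0) := by
    intro b
    rcases lt_trichotomy i b with h | h | h
    · rw [if_pos h, if_neg (asymm h), if_neg h.ne]; ring
    · rw [if_neg h.not_lt, if_neg (h ▸ lt_irrefl i), if_pos h]; ring
    · rw [if_neg (asymm h), if_pos h, if_neg (ne_of_gt h)]; ring
  rw [Finset.sum_congr rfl (fun b _ => h b), Finset.sum_sub_distrib, sum_pick1 i (fun _ => 1)]
  simp

lemma nashT_pos (n : ℕ) (hn : 2 ≤ n) : 0 < nashT n := by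
  have : (1:ℝ) ≤ (n:ℝ) - 1 := by
    have : (2:ℝ) ≤ (n:ℝ) := by exact_mod_cast hn
    linarith
  unfold nashT
  positivity

lemma nashT_mul (n : ℕ) (hn : 2 ≤ n) : nashT n * ((n:ℝ) - 1) = 1 / 2 := by
  have h : (n:ℝ) - 1 ≠ 0 := by
    have : (2:ℝ) ≤ (n:ℝ) := by exact_mod_cast hn
    linarith
  unfold nashT
  field_simp

lemma nashSum (n : ℕ) (hn : 2 ≤ n) (M : Fin n → Fin n → ℝ) (hsym : ∀ i j, M i j = M j i)
    (i j : Fin n) :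
    ∑ a : NashIdx n, nashCoef n a M * (((nashVec n a i : ℤ) : ℝ) * ((nashVec n a j : ℤ) : ℝ))
      = M i j := by
  set t := nashT n with ht
  rw [Fintype.sum_sum_type, Fintype.sum_prod_type, Fintype.sum_bool, ← Finset.sum_add_distrib]
  have hpt : ∀ p : {p : Fin n × Fin n // p.1 < p.2},
      nashCoef n (.inr (true, p)) M
          * (((nashVec n (.inr (true, p)) i : ℤ) : ℝ) * ((nashVec n (.inr (true, p)) j : ℤ) : ℝ))
        + nashCoef n (.inr (false, p)) M
          * (((nashVec n (.inr (false, p)) i : ℤ) : ℝ) * ((nashVec n (.inr (false, p)) j : ℤ) : ℝ))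
      = t * ((if i = p.1.1 then (1:ℝ) else 0) * (if j = p.1.1 then 1 else 0)
            + (if i = p.1.2 then (1:ℝ) else 0) * (if j = p.1.2 then 1 else 0))
        + M p.1.1 p.1.2 * ((if i = p.1.1 then (1:ℝ) else 0) * (if j = p.1.2 then 1 else 0)
            + (if i = p.1.2 then (1:ℝ) else 0) * (if j = p.1.1 then 1 else 0)) := by
    intro p
    rw [nashVec_inr_real, nashVec_inr_real, nashVec_inr_real, nashVec_inr_real]
    simp only [nashCoef, sgn, if_true, if_false, Int.cast_one, Int.cast_neg]
    have := pair_bracket t (M p.1.1 p.1.2) i j p.1.1 p.1.2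
    push_cast
    linear_combination this
  rw [Finset.sum_congr rfl (fun p _ => hpt p)]
  rw [sum_subtype_lt n (fun q =>
      t * ((if i = q.1 then (1:ℝ) else 0) * (if j = q.1 then 1 else 0)
            + (if i = q.2 then (1:ℝ) else 0) * (if j = q.2 then 1 else 0))
        + M q.1 q.2 * ((if i = q.1 then (1:ℝ) else 0) * (if j = q.2 then 1 else 0)
            + (if i = q.2 then (1:ℝ) else 0) * (if j = q.1 then 1 else 0)))]
  have hD : ∑ l : Fin n, nashCoef n (.inl l) M
      * (((nashVec n (.inl l) i : ℤ) : ℝ) * ((nashVec n (.inl l) j : ℤ) : ℝ))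
      = if i = j then M i i - 1 / 2 else 0 := by
    have hterm : ∀ l : Fin n, nashCoef n (.inl l) M
        * (((nashVec n (.inl l) i : ℤ) : ℝ) * ((nashVec n (.inl l) j : ℤ) : ℝ))
        = if i = l then (if i = j then M l l - 1/2 else 0) else 0 := by
      intro l
      rw [nashVec_inl_real, nashVec_inl_real]
      simp only [nashCoef]
      by_cases h1 : i = l
      · by_cases h3 : i = j
        · subst h1; subst h3; simp
        · have h2 : ¬ j = l := fun h => h3 (h1.trans h.symm)
          rw [if_neg h3, if_neg h2]; simp
      · simp [h1]
    rw [Finset.sum_congr rfl (fun l _ => hterm l), sum_pick1]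
  rw [hD]
  by_cases hij : i = j
  · subst hij
    rw [if_pos rfl]
    have h1 : ∀ a b : Fin n, (if a < b then
        t * ((if i = a then (1:ℝ) else 0) * (if i = a then 1 else 0)
            + (if i = b then (1:ℝ) else 0) * (if i = b then 1 else 0))
        + M a b * ((if i = a then (1:ℝ) else 0) * (if i = b then 1 else 0)
            + (if i = b then (1:ℝ) else 0) * (if i = a then 1 else 0)) else 0)
        = (if i = a then (if a < b then t else 0) else 0)
          + (if i = b then (if a < b then t else 0) else 0) := by
      intro a b
      by_cases hab : a < b
      · have hne : ¬ (i = a ∧ i = b) := by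
          rintro ⟨ha, hb⟩; exact absurd (ha.symm.trans hb ▸ hab) (lt_irrefl _)
        by_cases h1 : i = a <;> by_cases h2 : i = b
        · exact absurd ⟨h1, h2⟩ hne
        · simp [h1, h2, hab, hab.ne, hab.ne']
        · simp [h1, h2, hab, hab.ne, hab.ne']
        · simp [h1, h2, hab, hab.ne, hab.ne']
      · simp [hab]
    rw [Finset.sum_congr rfl (fun a _ => Finset.sum_congr rfl (fun b _ => h1 a b))]
    have e0 : ∑ a : Fin n, ∑ b : Fin n,
        ((if i = a then (if a < b then t else 0) else 0)
          + (if i = b then (if a < b then t else 0) else 0))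
        = (∑ a : Fin n, ∑ b : Fin n, (if i = a then (if a < b then t else 0) else 0))
          + ∑ a : Fin n, ∑ b : Fin n, (if i = b then (if a < b then t else 0) else 0) := by
      rw [← Finset.sum_add_distrib]
      exact Finset.sum_congr rfl (fun a _ => Finset.sum_add_distrib)
    rw [e0]
    have e1 : ∑ a : Fin n, ∑ b : Fin n, (if i = a then (if a < b then t else 0) else 0)
        = ∑ b : Fin n, (if i < b then t else 0) := by
      have : ∀ a : Fin n, ∑ b : Fin n, (if i = a then (if a < b then t else 0) else 0)
          = (if i = a then (∑ b : Fin n, if a < b then t else 0) else 0) := by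
        intro a; split_ifs <;> simp
      rw [Finset.sum_congr rfl (fun a _ => this a), sum_pick1]
    have e2 : ∑ a : Fin n, ∑ b : Fin n, (if i = b then (if a < b then t else 0) else 0)
        = ∑ a : Fin n, (if a < i then t else 0) := by
      rw [Finset.sum_comm]
      have : ∀ b : Fin n, ∑ a : Fin n, (if i = b then (if a < b then t else 0) else 0)
          = (if i = b then (∑ a : Fin n, if a < b then t else 0) else 0) := by
        intro b; split_ifs <;> simp
      rw [Finset.sum_congr rfl (fun b _ => this b), sum_pick1]
    rw [e1, e2, ← Finset.sum_add_distrib]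
    have e3 : ∑ b : Fin n, ((if i < b then t else 0) + (if b < i then t else 0))
        = t * ((n:ℝ) - 1) := by
      rw [← count_lt i, Finset.mul_sum]
      exact Finset.sum_congr rfl (fun b _ => by split_ifs <;> ring)
    rw [e3, ht, nashT_mul n hn]
    ring
  · rw [if_neg hij]
    have h1 : ∀ a b : Fin n, (if a < b then
        t * ((if i = a then (1:ℝ) else 0) * (if j = a then 1 else 0)
            + (if i = b then (1:ℝ) else 0) * (if j = b then 1 else 0))
        + M a b * ((if i = a then (1:ℝ) else 0) * (if j = b then 1 else 0)
            + (if i = b then (1:ℝ) else 0) * (if j = a then 1 else 0)) else 0)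
        = (if i = a then (if j = b then (if a < b then M a b else 0) else 0) else 0)
          + (if j = a then (if i = b then (if a < b then M a b else 0) else 0) else 0) := by
      intro a b
      by_cases hab : a < b
      · by_cases h1 : i = a <;> by_cases h2 : j = a <;> by_cases h3 : i = b <;>
          by_cases h4 : j = b <;>
          first
          | (exfalso; exact hij (by subst_vars; rfl))
          | (exfalso; exact absurd hab (by subst_vars; exact lt_irrefl _))
          | simp [h1, h2, h3, h4, hab, hab.ne, hab.ne', hij, Ne.symm hij]
      · simp [hab]
    rw [Finset.sum_congr rfl (fun a _ => Finset.sum_congr rfl (fun b _ => h1 a b))]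
    have e0 : ∑ a : Fin n, ∑ b : Fin n,
        ((if i = a then (if j = b then (if a < b then M a b else 0) else 0) else 0)
          + (if j = a then (if i = b then (if a < b then M a b else 0) else 0) else 0))
        = (∑ a : Fin n, ∑ b : Fin n,
            (if i = a then (if j = b then (if a < b then M a b else 0) else 0) else 0))
          + ∑ a : Fin n, ∑ b : Fin n,
            (if j = a then (if i = b then (if a < b then M a b else 0) else 0) else 0) := by
      rw [← Finset.sum_add_distrib]
      exact Finset.sum_congr rfl (fun a _ => Finset.sum_add_distrib)
    rw [e0, sum_pick i j (fun a b => if a < b then M a b else 0),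
      sum_pick j i (fun a b => if a < b then M a b else 0)]
    rcases lt_or_gt_of_ne hij with h | h
    · rw [if_pos h, if_neg (asymm h)]; ring
    · rw [if_neg (asymm h), if_pos h, hsym j i]; ring

lemma nashT_le (n : ℕ) (hn : 2 ≤ n) : nashT n ≤ 1 / 2 := by
  have h2 : (2:ℝ) ≤ (n:ℝ) := by exact_mod_cast hn
  have h : (2:ℝ) ≤ 2 * ((n:ℝ) - 1) := by linarith
  unfold nashT
  exact one_div_le_one_div_of_le two_pos h

lemma entry_bound (n : ℕ) (r₀ : ℝ) (M : Fin n → Fin n → ℝ) (h : M ∈ symBall n r₀)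
    (i j : Fin n) : |M i j - if i = j then 1 else 0| ≤ r₀ := by
  have hsq : (M i j - if i = j then 1 else 0) ^ 2
      ≤ ∑ i', ∑ j', (M i' j' - if i' = j' then 1 else 0) ^ 2 := by
    calc (M i j - if i = j then 1 else 0) ^ 2
        ≤ ∑ j', (M i j' - if i = j' then 1 else 0) ^ 2 :=
          Finset.single_le_sum (f := fun j' => (M i j' - if i = j' then 1 else 0) ^ 2)
            (fun j' _ => sq_nonneg _) (Finset.mem_univ j)
      _ ≤ ∑ i', ∑ j', (M i' j' - if i' = j' then 1 else 0) ^ 2 :=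
          Finset.single_le_sum (f := fun i' => ∑ j', (M i' j' - if i' = j' then 1 else 0) ^ 2)
            (fun i' _ => Finset.sum_nonneg (fun j' _ => sq_nonneg _)) (Finset.mem_univ i)
  calc |M i j - if i = j then 1 else 0|
      = Real.sqrt ((M i j - if i = j then 1 else 0) ^ 2) := (Real.sqrt_sq_eq_abs _).symm
    _ ≤ frobDistId n M := Real.sqrt_le_sqrt hsq
    _ ≤ r₀ := h.2

lemma coef_bounds (n : ℕ) (hn : 2 ≤ n) (M : Fin n → Fin n → ℝ)
    (hM : M ∈ symBall n (nashT n / 2)) (a : NashIdx n) :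
    nashT n / 4 ≤ nashCoef n a M ∧ nashCoef n a M ≤ 3 / 4 := by
  have ht0 := nashT_pos n hn
  have ht1 := nashT_le n hn
  match a with
  | .inl l =>
      have hb := entry_bound n _ M hM l l
      rw [if_pos rfl, abs_le] at hb
      simp only [nashCoef]
      constructor <;> linarith [hb.1, hb.2]
  | .inr (s, p) =>
      have hb := entry_bound n _ M hM p.1.1 p.1.2
      rw [if_neg p.2.ne, abs_le] at hb
      simp only [nashCoef]
      have ht : nashT n / 2 ≤ 1 / 4 := by linarith
      cases s <;>
        · simp only [sgn, if_true, if_false, Bool.false_eq_true]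
          push_cast
          constructor <;> linarith [hb.1, hb.2]

lemma nashVec_ne_zero (n : ℕ) (a : NashIdx n) : nashVec n a ≠ 0 := by
  match a with
  | .inl l =>
      intro h
      have := congr_fun h l
      simp [nashVec, Pi.single_apply] at this
  | .inr (s, p) =>
      intro h
      have h1 := congr_fun h p.1.1
      rw [nashVec_inr_apply n s p.1.1 p.1.2 p.2] at h1
      rw [if_pos rfl, if_neg p.2.ne] at h1
      simp at h1

lemma gamma_collapse (n : ℕ) (a₀ : NashIdx n) (M : Fin n → Fin n → ℝ) :
    (∑ a : NashIdx n, if nashVec n a₀ = nashVec n a then nashCoef n a M else 0)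
      = nashCoef n a₀ M := by
  have h : ∀ b : NashIdx n, b ≠ a₀ →
      (if nashVec n a₀ = nashVec n b then nashCoef n b M else 0) = 0 :=
    fun b hb => if_neg (fun h => hb (nashVec_inj n h.symm))
  rw [Fintype.sum_eq_single a₀ h, if_pos rfl]

lemma coef_contDiff (n : ℕ) (a : NashIdx n) : ContDiff ℝ (⊤ : ℕ∞) (nashCoef n a) := by
  have hev : ∀ i j : Fin n, ContDiff ℝ (⊤ : ℕ∞) (fun M : Fin n → Fin n → ℝ => M i j) := by
    intro i j
    have h1 : ContDiff ℝ (⊤ : ℕ∞) (fun M : Fin n → Fin n → ℝ => M i) :=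
      (ContinuousLinearMap.proj (R := ℝ) (φ := fun _ : Fin n => Fin n → ℝ) i).contDiff
    have h2 : ContDiff ℝ (⊤ : ℕ∞) (fun v : Fin n → ℝ => v j) :=
      (ContinuousLinearMap.proj (R := ℝ) (φ := fun _ : Fin n => ℝ) j).contDiff
    exact h2.comp h1
  match a with
  | .inl l =>
      have : nashCoef n (Sum.inl l) = fun M => M l l - 1/2 := rfl
      rw [this]
      exact (hev l l).sub contDiff_const
  | .inr (s, p) =>
      have : nashCoef n (Sum.inr (s, p))
          = fun M => (nashT n + (sgn s : ℝ) * M p.1.1 p.1.2) / 2 := rfl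
      rw [this]
      exact (contDiff_const.add (contDiff_const.mul (hev p.1.1 p.1.2))).div_const 2

theorem statement7 (n : ℕ) (hn : 2 ≤ n) :
    ∃ (r₀ γm γp : ℝ) (𝒦 : Finset (Fin n → ℤ))
      (Γ : (Fin n → ℤ) → (Fin n → Fin n → ℝ) → ℝ),
      0 < r₀ ∧ 0 < γm ∧ γm ≤ γp ∧
      𝒦.Nonempty ∧ (0 : Fin n → ℤ) ∉ 𝒦 ∧
      (∃ U : Set (Fin n → Fin n → ℝ), IsOpen U ∧ symBall n r₀ ⊆ U ∧
        ∀ k ∈ 𝒦, ContDiffOn ℝ (⊤ : ℕ∞) (Γ k) U) ∧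
      ∀ M ∈ symBall n r₀,
        (∀ k ∈ 𝒦, Γ k M ∈ Set.Icc γm γp) ∧
        ∀ i j, M i j = ∑ k ∈ 𝒦, (Γ k M) ^ 2 * ((k i : ℝ) * (k j : ℝ)) := by
  have ht0 := nashT_pos n hn
  have ht1 := nashT_le n hn
  refine ⟨nashT n / 2, Real.sqrt (nashT n / 4), Real.sqrt (3 / 4),
    Finset.univ.image (nashVec n),
    fun k M => Real.sqrt (∑ a : NashIdx n, if k = nashVec n a then nashCoef n a M else 0),
    by linarith, Real.sqrt_pos.mpr (by linarith), Real.sqrt_le_sqrt (by linarith),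
    ⟨nashVec n (.inl ⟨0, by omega⟩), Finset.mem_image_of_mem _ (Finset.mem_univ _)⟩,
    ?_, ?_, ?_⟩
  · intro h
    obtain ⟨a, -, ha⟩ := Finset.mem_image.mp h
    exact nashVec_ne_zero n a ha
  · refine ⟨{M | ∀ a : NashIdx n, 0 < nashCoef n a M}, ?_, ?_, ?_⟩
    · have hU : {M : Fin n → Fin n → ℝ | ∀ a : NashIdx n, 0 < nashCoef n a M}
          = ⋂ a : NashIdx n, {M | 0 < nashCoef n a M} := by
        ext M; simp [Set.mem_iInter]
      rw [hU]
      exact isOpen_iInter_of_finite fun a =>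
        isOpen_lt continuous_const (coef_contDiff n a).continuous
    · intro M hM a
      exact lt_of_lt_of_le (by linarith) (coef_bounds n hn M hM a).1
    · intro k hk
      obtain ⟨a₀, -, rfl⟩ := Finset.mem_image.mp hk
      simp only [gamma_collapse]
      exact ((coef_contDiff n a₀).contDiffOn).sqrt (fun M hM => (hM a₀).ne')
  · intro M hM
    constructor
    · intro k hk
      obtain ⟨a₀, -, rfl⟩ := Finset.mem_image.mp hk
      simp only [gamma_collapse]
      obtain ⟨hl, hr⟩ := coef_bounds n hn M hM a₀
      exact ⟨Real.sqrt_le_sqrt hl, Real.sqrt_le_sqrt hr⟩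
    · intro i j
      rw [Finset.sum_image (fun a _ b _ h => nashVec_inj n h)]
      rw [Finset.sum_congr rfl (fun a _ => ?_)]
      · exact (nashSum n hn M hM.1 i j).symm
      · simp only [gamma_collapse]
        rw [Real.sq_sqrt (le_trans (by linarith) (coef_bounds n hn M hM a).1)]

end
end

section
/- Let n ≥ 2 and let M = (M_{ij}) be a real symmetric n×n matrix. Denote by e_1, …, e_n the standard basis of ℝ^n and by v ⊗ v the rank-one matrix with entries v_i v_j. Then M = Σ_{i=1}^n (M_{ii} − 1/2) (e_i ⊗ e_i) + Σ_{1≤i<j≤n} (1/(4(n−1)) + M_{ij}/2) ((e_i + e_j) ⊗ (e_i + e_j)) + Σ_{1≤i<j≤n} (1/(4(n−1)) − M_{ij}/2) ((e_i − e_j) ⊗ (e_i − e_j)). Moreover, if |M_{ij} − δ_{ij}| ≤ 1/(4(n−1)) for all i, j (δ being the Kronecker delta), then every scalar coefficient appearing in this decomposition lies in the interval [1/(8(n−1)), 3/4]; in particular all coefficients are positive. -/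
/-- `(e_{i'} ⊗ e_{i'}) i j`. -/
def tensorDiag (n : ℕ) (i' i j : Fin n) : ℝ :=
  (if i = i' then 1 else 0) * (if j = i' then 1 else 0)

/-- `((e_{i'} ± e_{j'}) ⊗ (e_{i'} ± e_{j'})) i j`, with sign `ε = ±1`. -/
def tensorPM (n : ℕ) (ε : ℝ) (i' j' i j : Fin n) : ℝ :=
  ((if i = i' then 1 else 0) + ε * (if i = j' then 1 else 0)) *
    ((if j = i' then 1 else 0) + ε * (if j = j' then 1 else 0))

lemma aux_diag (n : ℕ) (g : Fin n → ℝ) (i j : Fin n) :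
    (∑ i', g i' * tensorDiag n i' i j) = if i = j then g i else 0 := by
  simp only [tensorDiag, mul_ite, mul_one, mul_zero, ite_mul, zero_mul]
  rw [Finset.sum_ite_eq]
  rcases eq_or_ne i j with h | h <;> simp [h, eq_comm]

lemma aux_count (n : ℕ) (i : Fin n) :
    (∑ k : Fin n, ((if i < k then (1:ℝ) else 0) + (if k < i then 1 else 0)))
      = (n : ℝ) - 1 := by
  have h : ∀ k : Fin n, ((if i < k then (1:ℝ) else 0) + (if k < i then 1 else 0))
      = 1 - (if k = i then 1 else 0) := by
    intro k
    rcases lt_trichotomy i k with h | h | h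
    · simp [h, asymm h, h.ne']
    · simp [h]
    · simp [h, asymm h, h.ne]
  rw [Finset.sum_congr rfl (fun k _ => h k), Finset.sum_sub_distrib,
    Finset.sum_ite_eq']
  simp

lemma aux_pick (n : ℕ) (f : Fin n × Fin n → ℝ) (i j : Fin n) :
    (∑ p ∈ Finset.univ.filter (fun p : Fin n × Fin n => p.1 < p.2),
      f p * ((if i = p.1 then (1:ℝ) else 0) * (if j = p.2 then 1 else 0)))
      = if i < j then f (i, j) else 0 := by
  have h : ∀ p : Fin n × Fin n,
      f p * ((if i = p.1 then (1:ℝ) else 0) * (if j = p.2 then 1 else 0))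
      = if (i, j) = p then f p else 0 := by
    intro p
    by_cases h1 : i = p.1 <;> by_cases h2 : j = p.2 <;>
      simp [h1, h2, Prod.ext_iff]
  rw [Finset.sum_congr rfl (fun p _ => h p), Finset.sum_ite_eq]
  simp

lemma aux_pair_count (n : ℕ) (i : Fin n) :
    (∑ p ∈ Finset.univ.filter (fun p : Fin n × Fin n => p.1 < p.2),
      ((if i = p.1 then (1:ℝ) else 0) + (if i = p.2 then 1 else 0)))
      = (n : ℝ) - 1 := by
  rw [Finset.sum_filter, Fintype.sum_prod_type]
  have h : ∀ a b : Fin n,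
      (if a < b then ((if i = a then (1:ℝ) else 0) + (if i = b then 1 else 0)) else 0)
      = (if i = a then (if a < b then (1:ℝ) else 0) else 0)
        + (if i = b then (if a < b then (1:ℝ) else 0) else 0) := by
    intro a b
    by_cases h1 : a < b <;> by_cases h2 : i = a <;> by_cases h3 : i = b <;>
      simp [h1, h2, h3]
  calc (∑ a : Fin n, ∑ b : Fin n,
        if a < b then ((if i = a then (1:ℝ) else 0) + (if i = b then 1 else 0)) else 0)
      = (∑ a : Fin n, ∑ b : Fin n,
          ((if i = a then (if a < b then (1:ℝ) else 0) else 0)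
            + (if i = b then (if a < b then (1:ℝ) else 0) else 0))) := by
        exact Finset.sum_congr rfl fun a _ => Finset.sum_congr rfl fun b _ => h a b
    _ = (∑ a : Fin n, ∑ b : Fin n, (if i = a then (if a < b then (1:ℝ) else 0) else 0))
        + (∑ a : Fin n, ∑ b : Fin n, (if i = b then (if a < b then (1:ℝ) else 0) else 0)) := by
        rw [← Finset.sum_add_distrib]
        exact Finset.sum_congr rfl fun a _ => Finset.sum_add_distrib
    _ = (∑ b : Fin n, (if i < b then (1:ℝ) else 0))
        + (∑ a : Fin n, (if a < i then (1:ℝ) else 0)) := by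
        congr 1
        · have : ∀ a : Fin n, (∑ b : Fin n, (if i = a then (if a < b then (1:ℝ) else 0) else 0))
              = if i = a then (∑ b : Fin n, (if a < b then (1:ℝ) else 0)) else 0 := by
            intro a; by_cases h2 : i = a <;> simp [h2]
          rw [Finset.sum_congr rfl fun a _ => this a, Finset.sum_ite_eq]
          simp
        · rw [Finset.sum_comm]
          have : ∀ b : Fin n, (∑ a : Fin n, (if i = b then (if a < b then (1:ℝ) else 0) else 0))
              = if i = b then (∑ a : Fin n, (if a < b then (1:ℝ) else 0)) else 0 := by
            intro b; by_cases h2 : i = b <;> simp [h2]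
          rw [Finset.sum_congr rfl fun b _ => this b, Finset.sum_ite_eq]
          simp
    _ = (n : ℝ) - 1 := by rw [← Finset.sum_add_distrib]; exact aux_count n i

lemma aux_zero (n : ℕ) (i j : Fin n) (hne : i ≠ j) :
    (∑ p ∈ Finset.univ.filter (fun p : Fin n × Fin n => p.1 < p.2),
      ((if i = p.1 then (1:ℝ) else 0) * (if j = p.1 then 1 else 0)
        + (if i = p.2 then (1:ℝ) else 0) * (if j = p.2 then 1 else 0))) = 0 := by
  apply Finset.sum_eq_zero
  intro p _
  have e1 : (if i = p.1 then (1:ℝ) else 0) * (if j = p.1 then 1 else 0) = 0 := by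
    rcases eq_or_ne i p.1 with h | h
    · have hj : j ≠ p.1 := fun hh => hne (h.trans hh.symm)
      simp [hj]
    · simp [h]
  have e2 : (if i = p.2 then (1:ℝ) else 0) * (if j = p.2 then 1 else 0) = 0 := by
    rcases eq_or_ne i p.2 with h | h
    · have hj : j ≠ p.2 := fun hh => hne (h.trans hh.symm)
      simp [hj]
    · simp [h]
  rw [e1, e2, add_zero]

theorem statement8
    (n : ℕ) (hn : 2 ≤ n)
    (M : Fin n → Fin n → ℝ) (hM : ∀ i j, M i j = M j i) :
    (∀ i j : Fin n,
      M i j =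
        (∑ i', (M i' i' - 1 / 2) * tensorDiag n i' i j)
        + (∑ pp ∈ Finset.univ.filter (fun pp : Fin n × Fin n => pp.1 < pp.2),
            (1 / (4 * ((n : ℝ) - 1)) + M pp.1 pp.2 / 2) * tensorPM n 1 pp.1 pp.2 i j)
        + (∑ pp ∈ Finset.univ.filter (fun pp : Fin n × Fin n => pp.1 < pp.2),
            (1 / (4 * ((n : ℝ) - 1)) - M pp.1 pp.2 / 2) * tensorPM n (-1) pp.1 pp.2 i j))
    ∧ ((∀ i j : Fin n, |M i j - if i = j then 1 else 0| ≤ 1 / (4 * ((n : ℝ) - 1))) →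
        (∀ i : Fin n,
          M i i - 1 / 2 ∈ Set.Icc (1 / (8 * ((n : ℝ) - 1))) (3 / 4))
        ∧ ∀ i j : Fin n, i < j →
            (1 / (4 * ((n : ℝ) - 1)) + M i j / 2
                ∈ Set.Icc (1 / (8 * ((n : ℝ) - 1))) (3 / 4))
            ∧ (1 / (4 * ((n : ℝ) - 1)) - M i j / 2
                ∈ Set.Icc (1 / (8 * ((n : ℝ) - 1))) (3 / 4))) := by
  have hA : (1:ℝ) ≤ (n : ℝ) - 1 := by
    have : (2:ℝ) ≤ (n : ℝ) := by exact_mod_cast hn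
    linarith
  have hA0 : ((n : ℝ) - 1) ≠ 0 := by linarith
  constructor
  · intro i j
    rw [aux_diag]
    have key : (∑ pp ∈ Finset.univ.filter (fun pp : Fin n × Fin n => pp.1 < pp.2),
          (1 / (4 * ((n : ℝ) - 1)) + M pp.1 pp.2 / 2) * tensorPM n 1 pp.1 pp.2 i j)
        + (∑ pp ∈ Finset.univ.filter (fun pp : Fin n × Fin n => pp.1 < pp.2),
          (1 / (4 * ((n : ℝ) - 1)) - M pp.1 pp.2 / 2) * tensorPM n (-1) pp.1 pp.2 i j)
        = if i = j then 1 / 2 else M i j := by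
      rw [← Finset.sum_add_distrib]
      have hpt : ∀ p : Fin n × Fin n,
          (1 / (4 * ((n : ℝ) - 1)) + M p.1 p.2 / 2) * tensorPM n 1 p.1 p.2 i j
          + (1 / (4 * ((n : ℝ) - 1)) - M p.1 p.2 / 2) * tensorPM n (-1) p.1 p.2 i j
          = (1 / (4 * ((n : ℝ) - 1)) * 2)
              * ((if i = p.1 then (1:ℝ) else 0) * (if j = p.1 then 1 else 0)
                + (if i = p.2 then (1:ℝ) else 0) * (if j = p.2 then 1 else 0))
            + ((fun q : Fin n × Fin n => M q.1 q.2) p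
                  * ((if i = p.1 then (1:ℝ) else 0) * (if j = p.2 then 1 else 0))
              + (fun q : Fin n × Fin n => M q.1 q.2) p
                  * ((if j = p.1 then (1:ℝ) else 0) * (if i = p.2 then 1 else 0))) := by
        intro p
        simp only [tensorPM]
        ring
      rw [Finset.sum_congr rfl fun p _ => hpt p, Finset.sum_add_distrib,
        Finset.sum_add_distrib, ← Finset.mul_sum]
      rw [aux_pick n (fun p => M p.1 p.2) i j, aux_pick n (fun p => M p.1 p.2) j i]
      rcases lt_trichotomy i j with hij | hij | hij
      · rw [aux_zero n i j hij.ne]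
        simp [hij, hij.ne, asymm hij]
      · subst hij
        have h12 : (∑ p ∈ Finset.univ.filter (fun p : Fin n × Fin n => p.1 < p.2),
            ((if i = p.1 then (1:ℝ) else 0) * (if i = p.1 then 1 else 0)
              + (if i = p.2 then (1:ℝ) else 0) * (if i = p.2 then 1 else 0)))
            = (n : ℝ) - 1 := by
          rw [← aux_pair_count n i]
          apply Finset.sum_congr rfl
          intro p hp
          have hlt := (Finset.mem_filter.mp hp).2
          by_cases h1 : i = p.1 <;> by_cases h2 : i = p.2 <;>
            simp [h1, h2, hlt.ne, hlt.ne']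
        rw [h12]
        simp only [lt_irrefl, if_neg (lt_irrefl i), if_pos rfl]
        field_simp
        norm_num
      · rw [aux_zero n i j hij.ne']
        simp [hij, hij.ne', asymm hij, hM i j]
    rw [add_assoc, key]
    rcases eq_or_ne i j with h | h
    · subst h; rw [if_pos rfl, if_pos rfl]; ring
    · simp [h]
  · intro hB
    have ht0 : 0 < 1 / (4 * ((n : ℝ) - 1)) := by positivity
    have ht4 : 1 / (4 * ((n : ℝ) - 1)) ≤ 1 / 4 := by
      rw [div_le_div_iff₀ (by linarith) (by norm_num)]
      linarith
    have ht8 : 1 / (8 * ((n : ℝ) - 1)) = (1 / (4 * ((n : ℝ) - 1))) / 2 := by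
      field_simp; ring
    constructor
    · intro i
      have h0 := hB i i
      rw [if_pos rfl] at h0
      have h := abs_le.mp h0
      rw [Set.mem_Icc]
      exact ⟨by linarith [h.1, h.2, ht8, ht4], by linarith [h.1, h.2, ht8, ht4]⟩
    · intro i j hij
      have h0 := hB i j
      rw [if_neg hij.ne, sub_zero] at h0
      have h := abs_le.mp h0
      refine ⟨Set.mem_Icc.mpr ⟨?_, ?_⟩, Set.mem_Icc.mpr ⟨?_, ?_⟩⟩ <;>
        linarith [h.1, h.2, ht8, ht4, ht0]
end
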